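/- arXiv:2412.20020 — 3 statements merged into one kernel-verified Lean document; each statement's English description precedes it below -/
import Mathlib

section
/- (Lemma 1 of the paper, made precise for finite discrete variables.) Let X, Y, Z, D, Θ be jointly distributed random variables with values in nonempty finite types, and suppose I(X;Y|(Θ,D,Z)) = 0, i.e. X and Y are conditionally independent given the joint variable (Θ,D,Z). Then for every strictly positive pmf r on the value space of Z, I(Y;D|Θ,Z) ≥ I(X;Y|Θ) − Σ_{(x,θ): p(x,θ)>0} p(x,θ) · KL(P_{Z|X=x,Θ=θ} ‖ r); that is, given the encoder Θ and representation Z, the information flowing from the local dataset D to the prediction Y is lower-bounded by I(X;Y|Θ) minus the expected KL divergence between the conditional representation distribution and the variational marginal r. -/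
open Finset

/-- Conditional mutual information `I(α;β|γ)` of a joint pmf `p` on `α × β × γ`,
with the convention `0·log 0 = 0` (automatic since `Real.log 0 = 0`). -/
noncomputable def condMI {α β γ : Type*} [Fintype α] [Fintype β] [Fintype γ]
    (p : α → β → γ → ℝ) : ℝ :=
  ∑ a, ∑ b, ∑ c, p a b c *
    Real.log (p a b c * (∑ a', ∑ b', p a' b' c) /
      ((∑ b', p a b' c) * (∑ a', p a' b c)))

/-- Kullback–Leibler divergence of pmfs on a finite type:
`KL(a‖b) = Σ_{t : a(t)>0} a(t) log (a(t)/b(t))`. -/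
noncomputable def KLdiv {τ : Type*} [Fintype τ] (a b : τ → ℝ) : ℝ :=
  ∑ t, if 0 < a t then a t * Real.log (a t / b t) else 0

namespace LemmaOneAux
section swaps
variable {M : Type*} [AddCommMonoid M] {α₁ α₂ α₃ α₄ α₅ : Type*}
  [Fintype α₁] [Fintype α₂] [Fintype α₃] [Fintype α₄] [Fintype α₅]
lemma sw12 (f : α₁ → α₂ → M) : ∑ a, ∑ b, f a b = ∑ b, ∑ a, f a b := Finset.sum_comm
lemma sw23 (f : α₁ → α₂ → α₃ → M) :
    ∑ a, ∑ b, ∑ c, f a b c = ∑ a, ∑ c, ∑ b, f a b c :=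
  Finset.sum_congr rfl fun _ _ => Finset.sum_comm
lemma sw34 (f : α₁ → α₂ → α₃ → α₄ → M) :
    ∑ a, ∑ b, ∑ c, ∑ d, f a b c d = ∑ a, ∑ b, ∑ d, ∑ c, f a b c d :=
  Finset.sum_congr rfl fun _ _ => sw23 _
lemma sw45 (f : α₁ → α₂ → α₃ → α₄ → α₅ → M) :
    ∑ a, ∑ b, ∑ c, ∑ d, ∑ e, f a b c d e = ∑ a, ∑ b, ∑ c, ∑ e, ∑ d, f a b c d e :=
  Finset.sum_congr rfl fun _ _ => sw34 _
lemma RA (f : α₁ → α₂ → α₃ → α₄ → α₅ → M) :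
    (∑ b, ∑ d, ∑ e, ∑ c, ∑ a, f a b c d e) = ∑ a, ∑ b, ∑ c, ∑ d, ∑ e, f a b c d e := calc
  (∑ b, ∑ d, ∑ e, ∑ c, ∑ a, f a b c d e)
      = ∑ b, ∑ d, ∑ e, ∑ a, ∑ c, f a b c d e := sw45 _
  _ = ∑ b, ∑ d, ∑ a, ∑ e, ∑ c, f a b c d e := sw34 _
  _ = ∑ b, ∑ a, ∑ d, ∑ e, ∑ c, f a b c d e := sw23 _
  _ = ∑ a, ∑ b, ∑ d, ∑ e, ∑ c, f a b c d e := sw12 _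
  _ = ∑ a, ∑ b, ∑ d, ∑ c, ∑ e, f a b c d e := sw45 _
  _ = ∑ a, ∑ b, ∑ c, ∑ d, ∑ e, f a b c d e := sw34 _
lemma RB (f : α₁ → α₂ → α₃ → α₄ → α₅ → M) :
    (∑ a, ∑ b, ∑ e, ∑ d, ∑ c, f a b c d e) = ∑ a, ∑ b, ∑ c, ∑ d, ∑ e, f a b c d e := calc
  (∑ a, ∑ b, ∑ e, ∑ d, ∑ c, f a b c d e)
      = ∑ a, ∑ b, ∑ e, ∑ c, ∑ d, f a b c d e := sw45 _
  _ = ∑ a, ∑ b, ∑ c, ∑ e, ∑ d, f a b c d e := sw34 _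
  _ = ∑ a, ∑ b, ∑ c, ∑ d, ∑ e, f a b c d e := sw45 _
lemma RC (f : α₁ → α₂ → α₃ → α₄ → α₅ → M) :
    (∑ a, ∑ e, ∑ c, ∑ b, ∑ d, f a b c d e) = ∑ a, ∑ b, ∑ c, ∑ d, ∑ e, f a b c d e := calc
  (∑ a, ∑ e, ∑ c, ∑ b, ∑ d, f a b c d e)
      = ∑ a, ∑ c, ∑ e, ∑ b, ∑ d, f a b c d e := sw23 _
  _ = ∑ a, ∑ c, ∑ b, ∑ e, ∑ d, f a b c d e := sw34 _
  _ = ∑ a, ∑ c, ∑ b, ∑ d, ∑ e, f a b c d e := sw45 _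
  _ = ∑ a, ∑ b, ∑ c, ∑ d, ∑ e, f a b c d e := sw23 _
lemma RD (f : α₁ → α₂ → α₃ → α₄ → α₅ → M) :
    (∑ a, ∑ b, ∑ e, ∑ c, ∑ d, f a b c d e) = ∑ a, ∑ b, ∑ c, ∑ d, ∑ e, f a b c d e := calc
  (∑ a, ∑ b, ∑ e, ∑ c, ∑ d, f a b c d e)
      = ∑ a, ∑ b, ∑ c, ∑ e, ∑ d, f a b c d e := sw34 _
  _ = ∑ a, ∑ b, ∑ c, ∑ d, ∑ e, f a b c d e := sw45 _
lemma RQ (f : α₁ → α₂ → α₃ → α₄ → α₅ → M) :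
    (∑ a, ∑ b, ∑ c, ∑ d, ∑ e, f a b c d e) = ∑ c, ∑ e, ∑ b, ∑ a, ∑ d, f a b c d e := calc
  (∑ a, ∑ b, ∑ c, ∑ d, ∑ e, f a b c d e)
      = ∑ a, ∑ c, ∑ b, ∑ d, ∑ e, f a b c d e := sw23 _
  _ = ∑ c, ∑ a, ∑ b, ∑ d, ∑ e, f a b c d e := sw12 _
  _ = ∑ c, ∑ a, ∑ b, ∑ e, ∑ d, f a b c d e := sw45 _
  _ = ∑ c, ∑ a, ∑ e, ∑ b, ∑ d, f a b c d e := sw34 _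
  _ = ∑ c, ∑ e, ∑ a, ∑ b, ∑ d, f a b c d e := sw23 _
  _ = ∑ c, ∑ e, ∑ b, ∑ a, ∑ d, f a b c d e := sw34 _
lemma RE (f : α₁ → α₂ → α₃ → α₄ → α₅ → M) :
    (∑ e, ∑ a, ∑ b, ∑ c, ∑ d, f a b c d e) = ∑ a, ∑ b, ∑ c, ∑ d, ∑ e, f a b c d e := calc
  (∑ e, ∑ a, ∑ b, ∑ c, ∑ d, f a b c d e)
      = ∑ a, ∑ e, ∑ b, ∑ c, ∑ d, f a b c d e := sw12 _
  _ = ∑ a, ∑ b, ∑ e, ∑ c, ∑ d, f a b c d e := sw23 _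
  _ = ∑ a, ∑ b, ∑ c, ∑ e, ∑ d, f a b c d e := sw34 _
  _ = ∑ a, ∑ b, ∑ c, ∑ d, ∑ e, f a b c d e := sw45 _
end swaps

section pos
variable {α β γ δ : Type*} [Fintype α] [Fintype β] [Fintype γ] [Fintype δ]
lemma pos1 {f : α → ℝ} (h0 : ∀ i, 0 ≤ f i) {i : α} (h : 0 < f i) : 0 < ∑ j, f j :=
  Finset.sum_pos' (fun j _ => h0 j) ⟨i, Finset.mem_univ i, h⟩
lemma pos2 {f : α → β → ℝ} (h0 : ∀ i j, 0 ≤ f i j) {i : α} {j : β} (h : 0 < f i j) :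
    0 < ∑ i', ∑ j', f i' j' :=
  pos1 (fun i' => Finset.sum_nonneg fun j' _ => h0 i' j') (pos1 (h0 i) h)
lemma pos3 {f : α → β → γ → ℝ} (h0 : ∀ i j k, 0 ≤ f i j k) {i j k} (h : 0 < f i j k) :
    0 < ∑ i', ∑ j', ∑ k', f i' j' k' :=
  pos1 (fun i' => Finset.sum_nonneg fun j' _ => Finset.sum_nonneg fun k' _ => h0 i' j' k')
    (pos2 (h0 i) h)
lemma pos4 {f : α → β → γ → δ → ℝ} (h0 : ∀ i j k l, 0 ≤ f i j k l) {i j k l}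
    (h : 0 < f i j k l) : 0 < ∑ i', ∑ j', ∑ k', ∑ l', f i' j' k' l' :=
  pos1 (fun i' => Finset.sum_nonneg fun j' _ => Finset.sum_nonneg fun k' _ =>
      Finset.sum_nonneg fun l' _ => h0 i' j' k' l')
    (pos3 (h0 i) h)
lemma zero3 {f : α → β → γ → ℝ} (h0 : ∀ a b c, 0 ≤ f a b c)
    (h : (∑ a, ∑ b, ∑ c, f a b c) = 0) (a : α) (b : β) (c : γ) : f a b c = 0 := by
  have h1 := (Finset.sum_eq_zero_iff_of_nonneg (fun a _ =>
      Finset.sum_nonneg fun b _ => Finset.sum_nonneg fun c _ => h0 a b c)).mp h a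
      (Finset.mem_univ a)
  have h2 := (Finset.sum_eq_zero_iff_of_nonneg (fun b _ =>
      Finset.sum_nonneg fun c _ => h0 a b c)).mp h1 b (Finset.mem_univ b)
  exact (Finset.sum_eq_zero_iff_of_nonneg (fun c _ => h0 a b c)).mp h2 c (Finset.mem_univ c)
lemma div_self_le_one' {a : ℝ} (h : 0 ≤ a) : a / a ≤ 1 := by
  rcases h.eq_or_lt with h' | h'
  · simp [← h']
  · rw [div_self h'.ne']
lemma key_pointwise (P Q : ℝ) (hP : 0 ≤ P) (hQ : 0 ≤ Q) (hPQ : 0 < P → 0 < Q) :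
    P - Q ≤ P * Real.log (P / Q) := by
  rcases hP.eq_or_lt with h | h
  · rw [← h]; simpa using hQ
  · have hq := hPQ h
    have hlog := Real.log_le_sub_one_of_pos (div_pos hq h)
    have h1 : Real.log (P / Q) = -Real.log (Q / P) := by rw [← Real.log_inv, inv_div]
    have h3 := mul_le_mul_of_nonneg_left hlog h.le
    have h2 : P * (Q / P - 1) = Q - P := by field_simp
    rw [h2] at h3
    rw [h1, mul_neg]
    linarith
lemma gibbs5 {α₁ α₂ α₃ α₄ α₅ : Type*}
    [Fintype α₁] [Fintype α₂] [Fintype α₃] [Fintype α₄] [Fintype α₅]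
    (P Q : α₁ → α₂ → α₃ → α₄ → α₅ → ℝ)
    (hP : ∀ a b c d e, 0 ≤ P a b c d e) (hQ : ∀ a b c d e, 0 ≤ Q a b c d e)
    (hPQ : ∀ a b c d e, 0 < P a b c d e → 0 < Q a b c d e)
    (hP1 : (∑ a, ∑ b, ∑ c, ∑ d, ∑ e, P a b c d e) = 1)
    (hQ1 : (∑ a, ∑ b, ∑ c, ∑ d, ∑ e, Q a b c d e) ≤ 1) :
    0 ≤ ∑ a, ∑ b, ∑ c, ∑ d, ∑ e, P a b c d e * Real.log (P a b c d e / Q a b c d e) := by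
  have step : (∑ a, ∑ b, ∑ c, ∑ d, ∑ e, (P a b c d e - Q a b c d e)) ≤
      ∑ a, ∑ b, ∑ c, ∑ d, ∑ e, P a b c d e * Real.log (P a b c d e / Q a b c d e) :=
    Finset.sum_le_sum fun a _ => Finset.sum_le_sum fun b _ => Finset.sum_le_sum fun c _ =>
      Finset.sum_le_sum fun d _ => Finset.sum_le_sum fun e _ =>
        key_pointwise _ _ (hP a b c d e) (hQ a b c d e) (hPQ a b c d e)
  have eq1 : (∑ a, ∑ b, ∑ c, ∑ d, ∑ e, (P a b c d e - Q a b c d e)) =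
      (∑ a, ∑ b, ∑ c, ∑ d, ∑ e, P a b c d e) - ∑ a, ∑ b, ∑ c, ∑ d, ∑ e, Q a b c d e := by
    simp only [Finset.sum_sub_distrib]
  rw [eq1, hP1] at step
  linarith
end pos

section defs
variable {X Y Z D Θ : Type*} [Fintype X] [Fintype Y] [Fintype Z] [Fintype D] [Fintype Θ]

noncomputable def mXbar (p : X → Y → Z → D → Θ → ℝ) (y : Y) (d : D) (θ : Θ) (z : Z) : ℝ := ∑ x, p x y z d θ
noncomputable def mYTZ (p : X → Y → Z → D → Θ → ℝ) (y : Y) (θ : Θ) (z : Z) : ℝ := ∑ d, ∑ x, p x y z d θ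
noncomputable def mDTZ (p : X → Y → Z → D → Θ → ℝ) (d : D) (θ : Θ) (z : Z) : ℝ := ∑ y, ∑ x, p x y z d θ
noncomputable def mTZ (p : X → Y → Z → D → Θ → ℝ) (θ : Θ) (z : Z) : ℝ := ∑ y, ∑ d, ∑ x, p x y z d θ
noncomputable def mTDZ (p : X → Y → Z → D → Θ → ℝ) (θ : Θ) (d : D) (z : Z) : ℝ := ∑ x, ∑ y, p x y z d θ
noncomputable def mXTDZ (p : X → Y → Z → D → Θ → ℝ) (x : X) (θ : Θ) (d : D) (z : Z) : ℝ := ∑ y, p x y z d θ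
noncomputable def mXYT (p : X → Y → Z → D → Θ → ℝ) (x : X) (y : Y) (θ : Θ) : ℝ := ∑ z, ∑ d, p x y z d θ
noncomputable def mXT (p : X → Y → Z → D → Θ → ℝ) (x : X) (θ : Θ) : ℝ := ∑ y, ∑ z, ∑ d, p x y z d θ
noncomputable def mYT (p : X → Y → Z → D → Θ → ℝ) (y : Y) (θ : Θ) : ℝ := ∑ x, ∑ z, ∑ d, p x y z d θ
noncomputable def mT (p : X → Y → Z → D → Θ → ℝ) (θ : Θ) : ℝ := ∑ x, ∑ y, ∑ z, ∑ d, p x y z d θ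
noncomputable def mXZT (p : X → Y → Z → D → Θ → ℝ) (x : X) (z : Z) (θ : Θ) : ℝ := ∑ y, ∑ d, p x y z d θ

noncomputable def Qf (p : X → Y → Z → D → Θ → ℝ) (r : Z → ℝ) (x : X) (y : Y) (z : Z) (d : D) (θ : Θ) : ℝ :=
  (mXTDZ p x θ d z / mXZT p x z θ) *
    ((mXYT p x y θ / mYT p y θ) * ((mYTZ p y θ z / mTZ p θ z) * (r z * mT p θ)))

lemma eA (p : X → Y → Z → D → Θ → ℝ) :
    condMI (fun y d (w : Θ × Z) => ∑ x, p x y w.2 d w.1) =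
      ∑ x, ∑ y, ∑ z, ∑ d, ∑ θ, p x y z d θ *
        Real.log (mXbar p y d θ z * mTZ p θ z / (mYTZ p y θ z * mDTZ p d θ z)) := calc
  condMI (fun y d (w : Θ × Z) => ∑ x, p x y w.2 d w.1)
      = ∑ y, ∑ d, ∑ θ, ∑ z, mXbar p y d θ z *
        Real.log (mXbar p y d θ z * mTZ p θ z / (mYTZ p y θ z * mDTZ p d θ z)) := by
        unfold condMI
        simp only [Fintype.sum_prod_type]
        rfl
  _ = ∑ y, ∑ d, ∑ θ, ∑ z, ∑ x, p x y z d θ *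
        Real.log (mXbar p y d θ z * mTZ p θ z / (mYTZ p y θ z * mDTZ p d θ z)) := by
        refine Finset.sum_congr rfl fun y _ => Finset.sum_congr rfl fun d _ =>
          Finset.sum_congr rfl fun θ _ => Finset.sum_congr rfl fun z _ => ?_
        calc mXbar p y d θ z *
              Real.log (mXbar p y d θ z * mTZ p θ z / (mYTZ p y θ z * mDTZ p d θ z))
            = (∑ x, p x y z d θ) *
              Real.log (mXbar p y d θ z * mTZ p θ z / (mYTZ p y θ z * mDTZ p d θ z)) := rfl
          _ = _ := Finset.sum_mul _ _ _
  _ = _ := RA _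

lemma eB (p : X → Y → Z → D → Θ → ℝ) :
    condMI (fun x y (w : Θ × D × Z) => p x y w.2.2 w.2.1 w.1) =
      ∑ x, ∑ y, ∑ z, ∑ d, ∑ θ, p x y z d θ *
        Real.log (p x y z d θ * mTDZ p θ d z / (mXTDZ p x θ d z * mXbar p y d θ z)) := calc
  condMI (fun x y (w : Θ × D × Z) => p x y w.2.2 w.2.1 w.1)
      = ∑ x, ∑ y, ∑ θ, ∑ d, ∑ z, p x y z d θ *
        Real.log (p x y z d θ * mTDZ p θ d z / (mXTDZ p x θ d z * mXbar p y d θ z)) := by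
        unfold condMI
        simp only [Fintype.sum_prod_type]
        rfl
  _ = _ := RB _

lemma eD (p : X → Y → Z → D → Θ → ℝ) :
    condMI (fun x y θ => ∑ z, ∑ d, p x y z d θ) =
      ∑ x, ∑ y, ∑ z, ∑ d, ∑ θ, p x y z d θ *
        Real.log (mXYT p x y θ * mT p θ / (mXT p x θ * mYT p y θ)) := calc
  condMI (fun x y θ => ∑ z, ∑ d, p x y z d θ)
      = ∑ x, ∑ y, ∑ θ, mXYT p x y θ *
        Real.log (mXYT p x y θ * mT p θ / (mXT p x θ * mYT p y θ)) := by
        unfold condMI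
        rfl
  _ = ∑ x, ∑ y, ∑ θ, ∑ z, ∑ d, p x y z d θ *
        Real.log (mXYT p x y θ * mT p θ / (mXT p x θ * mYT p y θ)) := by
        refine Finset.sum_congr rfl fun x _ => Finset.sum_congr rfl fun y _ =>
          Finset.sum_congr rfl fun θ _ => ?_
        calc mXYT p x y θ * Real.log (mXYT p x y θ * mT p θ / (mXT p x θ * mYT p y θ))
            = (∑ z, ∑ d, p x y z d θ) *
              Real.log (mXYT p x y θ * mT p θ / (mXT p x θ * mYT p y θ)) := rfl
          _ = ∑ z, (∑ d, p x y z d θ) *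
              Real.log (mXYT p x y θ * mT p θ / (mXT p x θ * mYT p y θ)) := Finset.sum_mul _ _ _
          _ = _ := Finset.sum_congr rfl fun z _ => Finset.sum_mul _ _ _
  _ = _ := RD _

end defs
section ec
variable {X Y Z D Θ : Type*} [Fintype X] [Fintype Y] [Fintype Z] [Fintype D] [Fintype Θ]

lemma eC (p : X → Y → Z → D → Θ → ℝ) (r : Z → ℝ) (hnn : ∀ x y z d θ, 0 ≤ p x y z d θ) :
    (∑ x, ∑ θ,
      (if 0 < (∑ y, ∑ z, ∑ d, p x y z d θ) then
        (∑ y, ∑ z, ∑ d, p x y z d θ) *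
          KLdiv (fun z => (∑ y, ∑ d, p x y z d θ) / (∑ y, ∑ z', ∑ d, p x y z' d θ)) r
      else 0)) =
    ∑ x, ∑ y, ∑ z, ∑ d, ∑ θ, p x y z d θ *
      Real.log (mXZT p x z θ / (mXT p x θ * r z)) := by
  have step1 : ∀ (x : X) (θ : Θ),
      (if 0 < mXT p x θ then
        mXT p x θ * KLdiv (fun z => mXZT p x z θ / mXT p x θ) r
      else 0) =
      ∑ z, mXZT p x z θ * Real.log (mXZT p x z θ / (mXT p x θ * r z)) := by
    intro x θ
    by_cases hxt : 0 < mXT p x θ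
    · rw [if_pos hxt]
      simp only [KLdiv]
      rw [Finset.mul_sum]
      refine Finset.sum_congr rfl fun z _ => ?_
      rw [mul_ite, mul_zero]
      by_cases hz : 0 < mXZT p x z θ / mXT p x θ
      · rw [if_pos hz]
        have h3 : mXZT p x z θ / mXT p x θ / r z = mXZT p x z θ / (mXT p x θ * r z) :=
          div_div _ _ _
        have h4 : mXT p x θ * (mXZT p x z θ / mXT p x θ) = mXZT p x z θ := by
          field_simp
        rw [h3, ← mul_assoc, h4]
      · rw [if_neg hz]
        have h0 : 0 ≤ mXZT p x z θ / mXT p x θ :=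
          div_nonneg (Finset.sum_nonneg fun _ _ => Finset.sum_nonneg fun _ _ => hnn _ _ _ _ _)
            hxt.le
        have h5 : mXZT p x z θ = 0 := by
          have h6 : mXZT p x z θ / mXT p x θ = 0 := le_antisymm (not_lt.mp hz) h0
          rcases div_eq_zero_iff.mp h6 with h | h
          · exact h
          · exact absurd h hxt.ne'
        rw [h5]
        simp
    · rw [if_neg hxt]
      have hxt0 : mXT p x θ = 0 :=
        le_antisymm (not_lt.mp hxt)
          (Finset.sum_nonneg fun _ _ => Finset.sum_nonneg fun _ _ =>
            Finset.sum_nonneg fun _ _ => hnn _ _ _ _ _)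
      have hp0 : ∀ y z d, p x y z d θ = 0 :=
        zero3 (fun y z d => hnn x y z d θ) hxt0
      have hz0 : ∀ z, mXZT p x z θ = 0 := by
        intro z
        simp [mXZT, hp0]
      symm
      refine Finset.sum_eq_zero fun z _ => ?_
      rw [hz0 z, zero_mul]
  calc (∑ x, ∑ θ,
      (if 0 < (∑ y, ∑ z, ∑ d, p x y z d θ) then
        (∑ y, ∑ z, ∑ d, p x y z d θ) *
          KLdiv (fun z => (∑ y, ∑ d, p x y z d θ) / (∑ y, ∑ z', ∑ d, p x y z' d θ)) r
      else 0))
      = ∑ x, ∑ θ, ∑ z, mXZT p x z θ * Real.log (mXZT p x z θ / (mXT p x θ * r z)) :=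
        Finset.sum_congr rfl fun x _ => Finset.sum_congr rfl fun θ _ => step1 x θ
    _ = ∑ x, ∑ θ, ∑ z, ∑ y, ∑ d, p x y z d θ *
          Real.log (mXZT p x z θ / (mXT p x θ * r z)) := by
        refine Finset.sum_congr rfl fun x _ => Finset.sum_congr rfl fun θ _ =>
          Finset.sum_congr rfl fun z _ => ?_
        calc mXZT p x z θ * Real.log (mXZT p x z θ / (mXT p x θ * r z))
            = (∑ y, ∑ d, p x y z d θ) *
              Real.log (mXZT p x z θ / (mXT p x θ * r z)) := rfl
          _ = ∑ y, (∑ d, p x y z d θ) *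
              Real.log (mXZT p x z θ / (mXT p x θ * r z)) := Finset.sum_mul _ _ _
          _ = _ := Finset.sum_congr rfl fun y _ => Finset.sum_mul _ _ _
    _ = _ := RC _

end ec
end LemmaOneAux

open LemmaOneAux

/-- Lemma 1 of the paper, made precise. For jointly
distributed `X, Y, Z, D, Θ` with `I(X;Y|(Θ,D,Z)) = 0` and any strictly positive
pmf `r` on the value space of `Z`,
`I(Y;D|Θ,Z) ≥ I(X;Y|Θ) − Σ_{(x,θ): p(x,θ)>0} p(x,θ)·KL(P_{Z|X=x,Θ=θ} ‖ r)`. -/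
theorem lemma_one
    {X Y Z D Θ : Type*} [Fintype X] [Fintype Y] [Fintype Z] [Fintype D]
    [Fintype Θ] [Nonempty X] [Nonempty Y] [Nonempty Z] [Nonempty D] [Nonempty Θ]
    (p : X → Y → Z → D → Θ → ℝ)
    (hnn : ∀ x y z d θ, 0 ≤ p x y z d θ)
    (hsum : ∑ x, ∑ y, ∑ z, ∑ d, ∑ θ, p x y z d θ = 1)
    (hzero : condMI (fun x y (w : Θ × D × Z) => p x y w.2.2 w.2.1 w.1) = 0)
    (r : Z → ℝ)
    (hr_pos : ∀ z, 0 < r z)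
    (hr_sum : ∑ z, r z = 1) :
    condMI (fun y d (w : Θ × Z) => ∑ x, p x y w.2 d w.1) ≥
      condMI (fun x y θ => ∑ z, ∑ d, p x y z d θ) -
        ∑ x, ∑ θ,
          (if 0 < (∑ y, ∑ z, ∑ d, p x y z d θ) then
            (∑ y, ∑ z, ∑ d, p x y z d θ) *
              KLdiv
                (fun z => (∑ y, ∑ d, p x y z d θ) / (∑ y, ∑ z', ∑ d, p x y z' d θ))
                r
          else 0) := by
  -- nonnegativity of the marginals
  have nXTDZ : ∀ (x : X) (θ : Θ) (d : D) (z : Z), (0:ℝ) ≤ mXTDZ p x θ d z :=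
    fun x θ d z => Finset.sum_nonneg fun _ _ => hnn _ _ _ _ _
  have nXZT : ∀ (x : X) (z : Z) (θ : Θ), (0:ℝ) ≤ mXZT p x z θ :=
    fun x z θ => Finset.sum_nonneg fun _ _ => Finset.sum_nonneg fun _ _ => hnn _ _ _ _ _
  have nXYT : ∀ (x : X) (y : Y) (θ : Θ), (0:ℝ) ≤ mXYT p x y θ :=
    fun x y θ => Finset.sum_nonneg fun _ _ => Finset.sum_nonneg fun _ _ => hnn _ _ _ _ _
  have nYT : ∀ (y : Y) (θ : Θ), (0:ℝ) ≤ mYT p y θ :=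
    fun y θ => Finset.sum_nonneg fun _ _ => Finset.sum_nonneg fun _ _ =>
      Finset.sum_nonneg fun _ _ => hnn _ _ _ _ _
  have nYTZ : ∀ (y : Y) (θ : Θ) (z : Z), (0:ℝ) ≤ mYTZ p y θ z :=
    fun y θ z => Finset.sum_nonneg fun _ _ => Finset.sum_nonneg fun _ _ => hnn _ _ _ _ _
  have nTZ : ∀ (θ : Θ) (z : Z), (0:ℝ) ≤ mTZ p θ z :=
    fun θ z => Finset.sum_nonneg fun _ _ => Finset.sum_nonneg fun _ _ =>
      Finset.sum_nonneg fun _ _ => hnn _ _ _ _ _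
  have nT : ∀ (θ : Θ), (0:ℝ) ≤ mT p θ :=
    fun θ => Finset.sum_nonneg fun _ _ => Finset.sum_nonneg fun _ _ =>
      Finset.sum_nonneg fun _ _ => Finset.sum_nonneg fun _ _ => hnn _ _ _ _ _
  have hQnn : ∀ x y z d θ, 0 ≤ Qf p r x y z d θ := by
    intro x y z d θ
    exact mul_nonneg (div_nonneg (nXTDZ x θ d z) (nXZT x z θ))
      (mul_nonneg (div_nonneg (nXYT x y θ) (nYT y θ))
        (mul_nonneg (div_nonneg (nYTZ y θ z) (nTZ θ z))
          (mul_nonneg (hr_pos z).le (nT θ))))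
  have hPQ : ∀ x y z d θ, 0 < p x y z d θ → 0 < Qf p r x y z d θ := by
    intro x y z d θ hp
    have hXTDZ : 0 < mXTDZ p x θ d z := pos1 (fun y' => hnn x y' z d θ) hp
    have hXZT : 0 < mXZT p x z θ := pos2 (fun y' d' => hnn x y' z d' θ) hp
    have hXYT : 0 < mXYT p x y θ := pos2 (fun z' d' => hnn x y z' d' θ) hp
    have hYT : 0 < mYT p y θ := pos3 (fun x' z' d' => hnn x' y z' d' θ) hp
    have hYTZ : 0 < mYTZ p y θ z := pos2 (fun d' x' => hnn x' y z d' θ) hp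
    have hTZ : 0 < mTZ p θ z := pos3 (fun y' d' x' => hnn x' y' z d' θ) hp
    have hT : 0 < mT p θ := pos4 (fun x' y' z' d' => hnn x' y' z' d' θ) hp
    exact mul_pos (div_pos hXTDZ hXZT) (mul_pos (div_pos hXYT hYT)
      (mul_pos (div_pos hYTZ hTZ) (mul_pos (hr_pos z) hT)))
  -- the expected value of mT is 1
  have hT1 : (∑ θ, mT p θ) = 1 := by
    calc (∑ θ, mT p θ) = ∑ θ, ∑ x, ∑ y, ∑ z, ∑ d, p x y z d θ := rfl
      _ = ∑ x, ∑ y, ∑ z, ∑ d, ∑ θ, p x y z d θ := RE _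
      _ = 1 := hsum
  -- the total mass of Qf is at most 1
  have hQ1 : (∑ x, ∑ y, ∑ z, ∑ d, ∑ θ, Qf p r x y z d θ) ≤ 1 := by
    calc (∑ x, ∑ y, ∑ z, ∑ d, ∑ θ, Qf p r x y z d θ)
        = ∑ z, ∑ θ, ∑ y, ∑ x, ∑ d, Qf p r x y z d θ := RQ _
      _ ≤ ∑ z, ∑ θ, ∑ y, ∑ x, (mXYT p x y θ / mYT p y θ) *
            ((mYTZ p y θ z / mTZ p θ z) * (r z * mT p θ)) := by
          refine Finset.sum_le_sum fun z _ => Finset.sum_le_sum fun θ _ =>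
            Finset.sum_le_sum fun y _ => Finset.sum_le_sum fun x _ => ?_
          have hsd : (∑ d, mXTDZ p x θ d z) = mXZT p x z θ := by
            unfold mXTDZ mXZT; exact Finset.sum_comm
          have hR : 0 ≤ (mXYT p x y θ / mYT p y θ) *
              ((mYTZ p y θ z / mTZ p θ z) * (r z * mT p θ)) :=
            mul_nonneg (div_nonneg (nXYT x y θ) (nYT y θ))
              (mul_nonneg (div_nonneg (nYTZ y θ z) (nTZ θ z))
                (mul_nonneg (hr_pos z).le (nT θ)))
          calc (∑ d, Qf p r x y z d θ)
              = (∑ d, mXTDZ p x θ d z / mXZT p x z θ) *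
                ((mXYT p x y θ / mYT p y θ) *
                  ((mYTZ p y θ z / mTZ p θ z) * (r z * mT p θ))) :=
                (Finset.sum_mul _ _ _).symm
            _ = ((∑ d, mXTDZ p x θ d z) / mXZT p x z θ) *
                ((mXYT p x y θ / mYT p y θ) *
                  ((mYTZ p y θ z / mTZ p θ z) * (r z * mT p θ))) := by
                rw [Finset.sum_div]
            _ = (mXZT p x z θ / mXZT p x z θ) *
                ((mXYT p x y θ / mYT p y θ) *
                  ((mYTZ p y θ z / mTZ p θ z) * (r z * mT p θ))) := by rw [hsd]
            _ ≤ 1 * ((mXYT p x y θ / mYT p y θ) *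
                  ((mYTZ p y θ z / mTZ p θ z) * (r z * mT p θ))) :=
                mul_le_mul_of_nonneg_right (div_self_le_one' (nXZT x z θ)) hR
            _ = _ := one_mul _
      _ ≤ ∑ z, ∑ θ, ∑ y, (mYTZ p y θ z / mTZ p θ z) * (r z * mT p θ) := by
          refine Finset.sum_le_sum fun z _ => Finset.sum_le_sum fun θ _ =>
            Finset.sum_le_sum fun y _ => ?_
          have hsx : (∑ x, mXYT p x y θ) = mYT p y θ := rfl
          have hR : 0 ≤ (mYTZ p y θ z / mTZ p θ z) * (r z * mT p θ) :=
            mul_nonneg (div_nonneg (nYTZ y θ z) (nTZ θ z))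
              (mul_nonneg (hr_pos z).le (nT θ))
          calc (∑ x, (mXYT p x y θ / mYT p y θ) *
                ((mYTZ p y θ z / mTZ p θ z) * (r z * mT p θ)))
              = (∑ x, mXYT p x y θ / mYT p y θ) *
                ((mYTZ p y θ z / mTZ p θ z) * (r z * mT p θ)) :=
                (Finset.sum_mul _ _ _).symm
            _ = ((∑ x, mXYT p x y θ) / mYT p y θ) *
                ((mYTZ p y θ z / mTZ p θ z) * (r z * mT p θ)) := by rw [Finset.sum_div]
            _ = (mYT p y θ / mYT p y θ) *
                ((mYTZ p y θ z / mTZ p θ z) * (r z * mT p θ)) := by rw [hsx]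
            _ ≤ 1 * ((mYTZ p y θ z / mTZ p θ z) * (r z * mT p θ)) :=
                mul_le_mul_of_nonneg_right (div_self_le_one' (nYT y θ)) hR
            _ = _ := one_mul _
      _ ≤ ∑ z, ∑ θ, r z * mT p θ := by
          refine Finset.sum_le_sum fun z _ => Finset.sum_le_sum fun θ _ => ?_
          have hsy : (∑ y, mYTZ p y θ z) = mTZ p θ z := rfl
          have hR : 0 ≤ r z * mT p θ := mul_nonneg (hr_pos z).le (nT θ)
          calc (∑ y, (mYTZ p y θ z / mTZ p θ z) * (r z * mT p θ))
              = (∑ y, mYTZ p y θ z / mTZ p θ z) * (r z * mT p θ) :=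
                (Finset.sum_mul _ _ _).symm
            _ = ((∑ y, mYTZ p y θ z) / mTZ p θ z) * (r z * mT p θ) := by
                rw [Finset.sum_div]
            _ = (mTZ p θ z / mTZ p θ z) * (r z * mT p θ) := by rw [hsy]
            _ ≤ 1 * (r z * mT p θ) :=
                mul_le_mul_of_nonneg_right (div_self_le_one' (nTZ θ z)) hR
            _ = _ := one_mul _
      _ = ∑ z, r z * ∑ θ, mT p θ :=
          Finset.sum_congr rfl fun z _ => (Finset.mul_sum _ _ _).symm
      _ = 1 := by rw [hT1]; simp only [mul_one]; exact hr_sum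
  -- the main identity
  have hmain :
      condMI (fun y d (w : Θ × Z) => ∑ x, p x y w.2 d w.1) +
        (condMI (fun x y (w : Θ × D × Z) => p x y w.2.2 w.2.1 w.1) +
          ((∑ x, ∑ θ,
            (if 0 < (∑ y, ∑ z, ∑ d, p x y z d θ) then
              (∑ y, ∑ z, ∑ d, p x y z d θ) *
                KLdiv
                  (fun z => (∑ y, ∑ d, p x y z d θ) / (∑ y, ∑ z', ∑ d, p x y z' d θ))
                  r
            else 0)) -
            condMI (fun x y θ => ∑ z, ∑ d, p x y z d θ))) =
      ∑ x, ∑ y, ∑ z, ∑ d, ∑ θ, p x y z d θ *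
        Real.log (p x y z d θ / Qf p r x y z d θ) := by
    rw [eA p, eB p, eC p r hnn, eD p]
    simp only [← Finset.sum_sub_distrib, ← Finset.sum_add_distrib]
    refine Finset.sum_congr rfl fun x _ => Finset.sum_congr rfl fun y _ =>
      Finset.sum_congr rfl fun z _ => Finset.sum_congr rfl fun d _ =>
      Finset.sum_congr rfl fun θ _ => ?_
    by_cases hp : 0 < p x y z d θ
    · have hXbar : 0 < mXbar p y d θ z := pos1 (fun x' => hnn x' y z d θ) hp
      have hYTZ : 0 < mYTZ p y θ z := pos2 (fun d' x' => hnn x' y z d' θ) hp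
      have hDTZ : 0 < mDTZ p d θ z := pos2 (fun y' x' => hnn x' y' z d θ) hp
      have hTZ : 0 < mTZ p θ z := pos3 (fun y' d' x' => hnn x' y' z d' θ) hp
      have hTDZ : 0 < mTDZ p θ d z := pos2 (fun x' y' => hnn x' y' z d θ) hp
      have hXTDZ : 0 < mXTDZ p x θ d z := pos1 (fun y' => hnn x y' z d θ) hp
      have hXYT : 0 < mXYT p x y θ := pos2 (fun z' d' => hnn x y z' d' θ) hp
      have hXT : 0 < mXT p x θ := pos3 (fun y' z' d' => hnn x y' z' d' θ) hp
      have hYT : 0 < mYT p y θ := pos3 (fun x' z' d' => hnn x' y z' d' θ) hp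
      have hT : 0 < mT p θ := pos4 (fun x' y' z' d' => hnn x' y' z' d' θ) hp
      have hXZT : 0 < mXZT p x z θ := pos2 (fun y' d' => hnn x y' z d' θ) hp
      have hrz := hr_pos z
      have hLA := div_pos (mul_pos hXbar hTZ) (mul_pos hYTZ hDTZ)
      have hLB := div_pos (mul_pos hp hTDZ) (mul_pos hXTDZ hXbar)
      have hLC := div_pos hXZT (mul_pos hXT hrz)
      have hLD := div_pos (mul_pos hXYT hT) (mul_pos hXT hYT)
      have hcomm : mTDZ p θ d z = mDTZ p d θ z := by
        unfold mTDZ mDTZ; exact Finset.sum_comm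
      have harg :
          Real.log (mXbar p y d θ z * mTZ p θ z / (mYTZ p y θ z * mDTZ p d θ z)) +
            Real.log (p x y z d θ * mTDZ p θ d z / (mXTDZ p x θ d z * mXbar p y d θ z)) +
            Real.log (mXZT p x z θ / (mXT p x θ * r z)) -
            Real.log (mXYT p x y θ * mT p θ / (mXT p x θ * mYT p y θ)) =
          Real.log (p x y z d θ / Qf p r x y z d θ) := by
        rw [← Real.log_mul hLA.ne' hLB.ne', ← Real.log_mul (mul_pos hLA hLB).ne' hLC.ne',
          ← Real.log_div (mul_pos (mul_pos hLA hLB) hLC).ne' hLD.ne']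
        congr 1
        rw [Qf, hcomm]
        field_simp
      rw [← harg]
      ring
    · have h0 : p x y z d θ = 0 := le_antisymm (not_lt.mp hp) (hnn x y z d θ)
      rw [h0]
      ring
  have hge := gibbs5 p (Qf p r) hnn hQnn hPQ hsum hQ1
  linarith [hmain, hge, hzero]
end

section
/- (Lemma 2 of the paper, made precise for finite discrete variables.) Let X, Y, Z, Θ be jointly distributed random variables with values in nonempty finite types such that Y and Z are conditionally independent given the joint variable (X,Θ). Then I(Y;Z|Θ) ≥ Σ_{(x,y,θ): p(x,y,θ)>0} p(x,y,θ) · Σ_{z: P_{Z|X=x,Θ=θ}(z)>0} P_{Z|X=x,Θ=θ}(z) · log P_{Y|Z=z,Θ=θ}(y). (All logarithms applied here are of strictly positive numbers: by conditional independence, p(x,y,θ) > 0 and P_{Z|X=x,Θ=θ}(z) > 0 imply p(y,z,θ) > 0, so P_{Y|Z=z,Θ=θ}(y) > 0.) -/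
open Finset

/-- Lemma 2 of the paper, made precise. For jointly
distributed `X, Y, Z, Θ` with `Y` and `Z` conditionally independent given the
joint variable `(X,Θ)` (expressed by the factorization
`p(x,y,z,θ)·p(x,θ) = p(x,y,θ)·p(x,z,θ)`),
`I(Y;Z|Θ) ≥ Σ_{(x,y,θ): p(x,y,θ)>0} p(x,y,θ) ·
  Σ_{z: P_{Z|X=x,Θ=θ}(z)>0} P_{Z|X=x,Θ=θ}(z) · log P_{Y|Z=z,Θ=θ}(y)`. -/
theorem lemma_two
    {X Y Z Θ : Type*} [Fintype X] [Fintype Y] [Fintype Z] [Fintype Θ]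
    [Nonempty X] [Nonempty Y] [Nonempty Z] [Nonempty Θ]
    (p : X → Y → Z → Θ → ℝ)
    (hnn : ∀ x y z θ, 0 ≤ p x y z θ)
    (hsum : ∑ x, ∑ y, ∑ z, ∑ θ, p x y z θ = 1)
    (hci : ∀ x y z θ,
      p x y z θ * (∑ y', ∑ z', p x y' z' θ) =
        (∑ z', p x y z' θ) * (∑ y', p x y' z θ)) :
    condMI (fun y z θ => ∑ x, p x y z θ) ≥
      ∑ x, ∑ y, ∑ θ,
        (if 0 < (∑ z, p x y z θ) then
          (∑ z, p x y z θ) *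
            (∑ z,
              if 0 < (∑ y', p x y' z θ) / (∑ y', ∑ z', p x y' z' θ) then
                ((∑ y', p x y' z θ) / (∑ y', ∑ z', p x y' z' θ)) *
                  Real.log ((∑ x', p x' y z θ) / (∑ x', ∑ y', p x' y' z θ))
              else 0)
        else 0) := by
  classical
  set q : Y → Z → Θ → ℝ := fun y z θ => ∑ x, p x y z θ with hqdef
  have hqnn : ∀ y z θ, 0 ≤ q y z θ := fun y z θ =>
    Finset.sum_nonneg fun x _ => hnn x y z θ
  set L : Y → Z → Θ → ℝ := fun y z θ =>
    Real.log ((∑ x', p x' y z θ) / (∑ x', ∑ y', p x' y' z θ)) with hLdef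
  -- Step 1: rewrite each (x,y,θ) term of the RHS
  have key : ∀ x y θ,
      (if 0 < (∑ z, p x y z θ) then
        (∑ z, p x y z θ) *
          (∑ z, if 0 < (∑ y', p x y' z θ) / (∑ y', ∑ z', p x y' z' θ) then
              ((∑ y', p x y' z θ) / (∑ y', ∑ z', p x y' z' θ)) * L y z θ
            else 0)
      else 0) = ∑ z, p x y z θ * L y z θ := by
    intro x y θ
    by_cases h3 : 0 < (∑ z, p x y z θ)
    · rw [if_pos h3, Finset.mul_sum]
      refine Finset.sum_congr rfl fun z _ => ?_
      have hpxθ : 0 < (∑ y', ∑ z', p x y' z' θ) :=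
        lt_of_lt_of_le h3 (Finset.single_le_sum
          (f := fun y' => ∑ z', p x y' z' θ)
          (fun i _ => Finset.sum_nonneg fun j _ => hnn x i j θ)
          (Finset.mem_univ y))
      by_cases hz : 0 < (∑ y', p x y' z θ)
      · rw [if_pos (div_pos hz hpxθ)]
        have h := hci x y z θ
        have hp : (∑ z', p x y z' θ) * ((∑ y', p x y' z θ) /
            (∑ y', ∑ z', p x y' z' θ)) = p x y z θ := by
          field_simp
          linarith
        rw [← hp]; ring
      · have hz0 : (∑ y', p x y' z θ) = 0 := by
          rcases (Finset.sum_nonneg fun i (_ : i ∈ Finset.univ) => hnn x i z θ).lt_or_eq with h | h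
          · exact absurd h hz
          · exact h.symm
        have hp0 : p x y z θ = 0 := by
          have h := hci x y z θ
          rw [hz0, mul_zero] at h
          exact (mul_eq_zero.mp h).resolve_right (ne_of_gt hpxθ)
        rw [if_neg (by rw [hz0]; simp)]
        simp [hp0]
    · rw [if_neg h3]
      have h30 : (∑ z, p x y z θ) = 0 := by
        rcases (Finset.sum_nonneg fun i (_ : i ∈ Finset.univ) => hnn x y i θ).lt_or_eq with h | h
        · exact absurd h h3
        · exact h.symm
      have : ∀ z, p x y z θ = 0 := fun z =>
        (Finset.sum_eq_zero_iff_of_nonneg (fun i _ => hnn x y i θ)).mp h30 z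
          (Finset.mem_univ z)
      symm
      exact Finset.sum_eq_zero fun z _ => by simp [this z]
  rw [Finset.sum_congr rfl fun x _ => Finset.sum_congr rfl fun y _ => Finset.sum_congr rfl fun θ _ => key x y θ]
  -- Step 2: reorder the quadruple sum
  have swap : (∑ x, ∑ y, ∑ θ, ∑ z, p x y z θ * L y z θ)
      = ∑ y, ∑ z, ∑ θ, q y z θ * L y z θ := by
    have h1 : ∀ y z θ, q y z θ * L y z θ = ∑ x, p x y z θ * L y z θ := by
      intro y z θ
      simp only [hqdef]
      rw [Finset.sum_mul]
    simp_rw [h1]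
    rw [Finset.sum_comm]
    refine Finset.sum_congr rfl fun y _ => ?_
    calc (∑ x, ∑ θ, ∑ z, p x y z θ * L y z θ)
        = ∑ θ, ∑ x, ∑ z, p x y z θ * L y z θ := Finset.sum_comm
      _ = ∑ θ, ∑ z, ∑ x, p x y z θ * L y z θ :=
          Finset.sum_congr rfl fun θ _ => Finset.sum_comm
      _ = ∑ z, ∑ θ, ∑ x, p x y z θ * L y z θ := Finset.sum_comm
  rw [swap, ge_iff_le, condMI]
  refine Finset.sum_le_sum fun y _ => Finset.sum_le_sum fun z _ =>
    Finset.sum_le_sum fun θ _ => ?_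
  rcases (hqnn y z θ).lt_or_eq with hq | hq
  · have hzθ : 0 < ∑ y', q y' z θ :=
      lt_of_lt_of_le hq (Finset.single_le_sum (fun i _ => hqnn i z θ)
        (Finset.mem_univ y))
    have hyθ : 0 < ∑ z', q y z' θ :=
      lt_of_lt_of_le hq (Finset.single_le_sum (fun i _ => hqnn y i θ)
        (Finset.mem_univ z))
    have hθ : 0 < ∑ y', ∑ z', q y' z' θ :=
      lt_of_lt_of_le hyθ (Finset.single_le_sum
        (f := fun y' => ∑ z', q y' z' θ)
        (fun i _ => Finset.sum_nonneg fun j _ => hqnn i j θ)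
        (Finset.mem_univ y))
    have hle : (∑ z', q y z' θ) ≤ ∑ y', ∑ z', q y' z' θ :=
      Finset.single_le_sum (f := fun y' => ∑ z', q y' z' θ)
        (fun i _ => Finset.sum_nonneg fun j _ => hqnn i j θ)
        (Finset.mem_univ y)
    have hLeq : L y z θ = Real.log (q y z θ / ∑ y', q y' z θ) := by
      simp only [hLdef, hqdef]
      rw [Finset.sum_comm]
    have harg : q y z θ * (∑ y', ∑ z', q y' z' θ) /
        ((∑ z', q y z' θ) * (∑ y', q y' z θ))
        = (q y z θ / ∑ y', q y' z θ) *
          ((∑ y', ∑ z', q y' z' θ) / (∑ z', q y z' θ)) := by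
      field_simp
    rw [harg, Real.log_mul (ne_of_gt (div_pos hq hzθ))
      (ne_of_gt (div_pos hθ hyθ)), hLeq]
    have hlog : 0 ≤ Real.log ((∑ y', ∑ z', q y' z' θ) / (∑ z', q y z' θ)) :=
      Real.log_nonneg ((one_le_div hyθ).mpr hle)
    nlinarith
  · simp [← hq]
end

section
/- (Rigorous kernel of Theorem 1, the Generality–Personalization Tradeoff: lower bound on the Lagrangian Δ = I(ȳ′;z̄|θ_b,D) − β·I(ȳ′,D;θ_b|x′).) Let X, Y, Z, D, Θ be jointly distributed random variables with values in nonempty finite types such that (i) X and Y are conditionally independent given the joint variable (Θ,D,Z), and (ii) Y and Z are conditionally independent given the joint variable (X,Θ). Let β ≥ 0 be a real number, and let r_Z and r_Θ be strictly positive pmfs on the value spaces of Z and Θ respectively. Then I(Y;Z|Θ,D) − β·I((Y,D);Θ|X) ≥ [Σ_{(x,y,θ): p(x,y,θ)>0} p(x,y,θ) · Σ_{z: P_{Z|X=x,Θ=θ}(z)>0} P_{Z|X=x,Θ=θ}(z) · log P_{Y|Z=z,Θ=θ}(y)] + I(X;Y|Θ) − I(Y;D|Θ) − Σ_{(x,θ):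 p(x,θ)>0} p(x,θ) · KL(P_{Z|X=x,Θ=θ} ‖ r_Z) − β·Σ_{(x,y,d): p(x,y,d)>0} p(x,y,d) · KL(P_{Θ|X=x,Y=y,D=d} ‖ r_Θ). -/
open Finset

private lemma scongr {α M : Type*} [Fintype α] [AddCommMonoid M] {f g : α → M}
    (h : ∀ a, f a = g a) : ∑ a, f a = ∑ a, g a :=
  Finset.sum_congr rfl fun a _ => h a

private lemma snn {α : Type*} [Fintype α] {f : α → ℝ} (h : ∀ a, 0 ≤ f a) :
    0 ≤ ∑ a, f a := Finset.sum_nonneg fun a _ => h a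

private lemma sle {α : Type*} [Fintype α] {f : α → ℝ} (h : ∀ a, 0 ≤ f a)
    (a : α) : f a ≤ ∑ i, f i :=
  Finset.single_le_sum (fun i _ => h i) (Finset.mem_univ a)

private lemma sle2 {α β : Type*} [Fintype α] [Fintype β] {f : α → β → ℝ}
    (h : ∀ a b, 0 ≤ f a b) (a : α) (b : β) : f a b ≤ ∑ a', ∑ b', f a' b' :=
  (sle (h a) b).trans (sle (fun a' => snn (h a')) a)

private lemma sle3 {α β γ : Type*} [Fintype α] [Fintype β] [Fintype γ] {f : α → β → γ → ℝ}
    (h : ∀ a b c, 0 ≤ f a b c) (a : α) (b : β) (c : γ) :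
    f a b c ≤ ∑ a', ∑ b', ∑ c', f a' b' c' :=
  (sle2 (h a) b c).trans (sle (fun a' => snn fun b' => snn (h a' b')) a)

private lemma sle4 {α β γ δ : Type*} [Fintype α] [Fintype β] [Fintype γ] [Fintype δ]
    {f : α → β → γ → δ → ℝ} (h : ∀ a b c d, 0 ≤ f a b c d) (a : α) (b : β) (c : γ) (d : δ) :
    f a b c d ≤ ∑ a', ∑ b', ∑ c', ∑ d', f a' b' c' d' :=
  (sle3 (h a) b c d).trans (sle (fun a' => snn fun b' => snn fun c' => snn (h a' b' c')) a)

private lemma p2 {α β M : Type*} [Fintype α] [Fintype β] [AddCommMonoid M]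
    (f : α → β → M) : ∑ a, ∑ b, f a b = ∑ b, ∑ a, f a b := Finset.sum_comm

private lemma p3 {α β γ M : Type*} [Fintype α] [Fintype β] [Fintype γ] [AddCommMonoid M]
    (f : α → β → γ → M) : ∑ a, ∑ b, ∑ c, f a b c = ∑ c, ∑ a, ∑ b, f a b c :=
  (scongr fun _ => Finset.sum_comm).trans Finset.sum_comm

private lemma p4 {α β γ δ M : Type*} [Fintype α] [Fintype β] [Fintype γ] [Fintype δ]
    [AddCommMonoid M] (f : α → β → γ → δ → M) :
    ∑ a, ∑ b, ∑ c, ∑ d, f a b c d = ∑ d, ∑ a, ∑ b, ∑ c, f a b c d :=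
  (scongr fun a => p3 (f a)).trans Finset.sum_comm

private lemma p5 {α β γ δ ε M : Type*} [Fintype α] [Fintype β] [Fintype γ] [Fintype δ]
    [Fintype ε] [AddCommMonoid M] (f : α → β → γ → δ → ε → M) :
    ∑ a, ∑ b, ∑ c, ∑ d, ∑ e, f a b c d e = ∑ e, ∑ a, ∑ b, ∑ c, ∑ d, f a b c d e :=
  (scongr fun a => p4 (f a)).trans Finset.sum_comm

private lemma gibbs {ι : Type*} [Fintype ι] (a b : ι → ℝ) (ha : ∀ i, 0 ≤ a i)
    (hb : ∀ i, 0 ≤ b i) (hab : ∀ i, 0 < a i → 0 < b i)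
    (h : ∑ i, b i ≤ ∑ i, a i) :
    0 ≤ ∑ i, a i * (Real.log (a i) - Real.log (b i)) := by
  have key : ∀ i, a i - b i ≤ a i * (Real.log (a i) - Real.log (b i)) := fun i => by
    rcases (ha i).lt_or_eq with hip | hip
    · have hbp := hab i hip
      have hlog : Real.log (b i / a i) ≤ b i / a i - 1 :=
        Real.log_le_sub_one_of_pos (div_pos hbp hip)
      rw [Real.log_div (ne_of_gt hbp) (ne_of_gt hip)] at hlog
      have h2 : a i * (b i / a i) = b i := by field_simp
      nlinarith [mul_le_mul_of_nonneg_left hlog (le_of_lt hip)]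
    · rw [← hip]; simpa using hb i
  calc (0:ℝ) ≤ ∑ i, (a i - b i) := by rw [Finset.sum_sub_distrib]; linarith
    _ ≤ _ := Finset.sum_le_sum fun i _ => key i

private lemma condMI_expand {α β γ : Type*} [Fintype α] [Fintype β] [Fintype γ]
    (q : α → β → γ → ℝ) (hq : ∀ a b c, 0 ≤ q a b c) :
    condMI q = ∑ a, ∑ b, ∑ c, q a b c *
      (Real.log (q a b c) + Real.log (∑ a', ∑ b', q a' b' c)
        - Real.log (∑ b', q a b' c) - Real.log (∑ a', q a' b c)) := by
  unfold condMI
  refine scongr fun a => scongr fun b => scongr fun c => ?_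
  rcases (hq a b c).lt_or_eq with hpos | h0
  · have h1 : 0 < ∑ b', q a b' c := lt_of_lt_of_le hpos (sle (fun b' => hq a b' c) b)
    have h2 : 0 < ∑ a', q a' b c := lt_of_lt_of_le hpos (sle (fun a' => hq a' b c) a)
    have h3 : 0 < ∑ a', ∑ b', q a' b' c := lt_of_lt_of_le hpos (sle2 (fun a' b' => hq a' b' c) a b)
    rw [Real.log_div (by positivity) (by positivity),
      Real.log_mul (ne_of_gt hpos) (ne_of_gt h3), Real.log_mul (ne_of_gt h1) (ne_of_gt h2)]
    ring
  · rw [← h0]; ring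

section marginals

variable {X Y Z D Θ : Type*} [Fintype X] [Fintype Y] [Fintype Z] [Fintype D] [Fintype Θ]

noncomputable def mgX (p : X → Y → Z → D → Θ → ℝ) (x : X) : ℝ :=
  ∑ y, ∑ z, ∑ d, ∑ θ, p x y z d θ
noncomputable def mgTh (p : X → Y → Z → D → Θ → ℝ) (θ : Θ) : ℝ :=
  ∑ x, ∑ y, ∑ z, ∑ d, p x y z d θ
noncomputable def mgXTh (p : X → Y → Z → D → Θ → ℝ) (x : X) (θ : Θ) : ℝ :=
  ∑ y, ∑ z, ∑ d, p x y z d θ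
noncomputable def mgYTh (p : X → Y → Z → D → Θ → ℝ) (y : Y) (θ : Θ) : ℝ :=
  ∑ x, ∑ z, ∑ d, p x y z d θ
noncomputable def mgZTh (p : X → Y → Z → D → Θ → ℝ) (z : Z) (θ : Θ) : ℝ :=
  ∑ x, ∑ y, ∑ d, p x y z d θ
noncomputable def mgDTh (p : X → Y → Z → D → Θ → ℝ) (d : D) (θ : Θ) : ℝ :=
  ∑ x, ∑ y, ∑ z, p x y z d θ
noncomputable def mgXYTh (p : X → Y → Z → D → Θ → ℝ) (x : X) (y : Y) (θ : Θ) : ℝ :=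
  ∑ z, ∑ d, p x y z d θ
noncomputable def mgXZTh (p : X → Y → Z → D → Θ → ℝ) (x : X) (z : Z) (θ : Θ) : ℝ :=
  ∑ y, ∑ d, p x y z d θ
noncomputable def mgYZTh (p : X → Y → Z → D → Θ → ℝ) (y : Y) (z : Z) (θ : Θ) : ℝ :=
  ∑ x, ∑ d, p x y z d θ
noncomputable def mgYDTh (p : X → Y → Z → D → Θ → ℝ) (y : Y) (d : D) (θ : Θ) : ℝ :=
  ∑ x, ∑ z, p x y z d θ
noncomputable def mgZDTh (p : X → Y → Z → D → Θ → ℝ) (z : Z) (d : D) (θ : Θ) : ℝ :=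
  ∑ x, ∑ y, p x y z d θ
noncomputable def mgXYD (p : X → Y → Z → D → Θ → ℝ) (x : X) (y : Y) (d : D) : ℝ :=
  ∑ z, ∑ θ, p x y z d θ
noncomputable def mgXYDTh (p : X → Y → Z → D → Θ → ℝ) (x : X) (y : Y) (d : D) (θ : Θ) : ℝ :=
  ∑ z, p x y z d θ
noncomputable def mgYZDTh (p : X → Y → Z → D → Θ → ℝ) (y : Y) (z : Z) (d : D) (θ : Θ) : ℝ :=
  ∑ x, p x y z d θ

end marginals

noncomputable def SS {X Y Z D Θ : Type*} [Fintype X] [Fintype Y] [Fintype Z] [Fintype D]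
    [Fintype Θ] (p F : X → Y → Z → D → Θ → ℝ) : ℝ :=
  ∑ x, ∑ y, ∑ z, ∑ d, ∑ θ, p x y z d θ * F x y z d θ

set_option maxHeartbeats 2000000 in
/-- rigorous kernel of the Generality–Personalization Tradeoff
theorem: a lower bound on the Lagrangian
`Δ = I(Y;Z|Θ,D) − β·I((Y,D);Θ|X)` under the conditional independences
(i) `X ⟂ Y | (Θ,D,Z)` and (ii) `Y ⟂ Z | (X,Θ)` (both expressed by
factorization of the corresponding marginal pmfs), for any `β ≥ 0` and
strictly positive pmfs `rZ`, `rΘ`. -/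
theorem generality_personalization_tradeoff
    {X Y Z D Θ : Type*} [Fintype X] [Fintype Y] [Fintype Z] [Fintype D]
    [Fintype Θ] [Nonempty X] [Nonempty Y] [Nonempty Z] [Nonempty D] [Nonempty Θ]
    (p : X → Y → Z → D → Θ → ℝ)
    (hnn : ∀ x y z d θ, 0 ≤ p x y z d θ)
    (hsum : ∑ x, ∑ y, ∑ z, ∑ d, ∑ θ, p x y z d θ = 1)
    (hci₁ : ∀ x y z d θ,
      p x y z d θ * (∑ x', ∑ y', p x' y' z d θ) =
        (∑ y', p x y' z d θ) * (∑ x', p x' y z d θ))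
    (hci₂ : ∀ x y z θ,
      (∑ d, p x y z d θ) * (∑ y', ∑ z', ∑ d, p x y' z' d θ) =
        (∑ z', ∑ d, p x y z' d θ) * (∑ y', ∑ d, p x y' z d θ))
    (β : ℝ) (hβ : 0 ≤ β)
    (rZ : Z → ℝ) (hrZ_pos : ∀ z, 0 < rZ z) (hrZ_sum : ∑ z, rZ z = 1)
    (rΘ : Θ → ℝ) (hrΘ_pos : ∀ θ, 0 < rΘ θ) (hrΘ_sum : ∑ θ, rΘ θ = 1) :
    condMI (fun y z (w : Θ × D) => ∑ x, p x y z w.2 w.1) -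
        β * condMI (fun (yd : Y × D) θ x => ∑ z, p x yd.1 z yd.2 θ) ≥
      (∑ x, ∑ y, ∑ θ,
        (if 0 < (∑ z, ∑ d, p x y z d θ) then
          (∑ z, ∑ d, p x y z d θ) *
            (∑ z,
              if 0 < (∑ y', ∑ d, p x y' z d θ) /
                  (∑ y', ∑ z', ∑ d, p x y' z' d θ) then
                ((∑ y', ∑ d, p x y' z d θ) /
                    (∑ y', ∑ z', ∑ d, p x y' z' d θ)) *
                  Real.log ((∑ x', ∑ d, p x' y z d θ) /
                    (∑ x', ∑ y', ∑ d, p x' y' z d θ))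
              else 0)
        else 0)) +
      condMI (fun x y θ => ∑ z, ∑ d, p x y z d θ) -
      condMI (fun y d θ => ∑ x, ∑ z, p x y z d θ) -
      (∑ x, ∑ θ,
        (if 0 < (∑ y, ∑ z, ∑ d, p x y z d θ) then
          (∑ y, ∑ z, ∑ d, p x y z d θ) *
            KLdiv
              (fun z => (∑ y, ∑ d, p x y z d θ) /
                (∑ y, ∑ z', ∑ d, p x y z' d θ))
              rZ
        else 0)) -
      β * (∑ x, ∑ y, ∑ d,
        (if 0 < (∑ z, ∑ θ, p x y z d θ) then
          (∑ z, ∑ θ, p x y z d θ) *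
            KLdiv
              (fun θ => (∑ z, p x y z d θ) / (∑ z, ∑ θ', p x y z d θ'))
              rΘ
        else 0)) := by
  -- conversions of the seven quantities into canonical full-support sums
  have hc1 : condMI (fun y z (w : Θ × D) => ∑ x, p x y z w.2 w.1) =
      SS p (fun _ y z d θ => Real.log (mgYZDTh p y z d θ) + Real.log (mgDTh p d θ)
        - Real.log (mgYDTh p y d θ) - Real.log (mgZDTh p z d θ)) := by
    rw [condMI_expand _ (fun y z (w : Θ × D) => snn fun x => hnn x y z w.2 w.1)]
    unfold SS mgYZDTh mgDTh mgYDTh mgZDTh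
    simp only [Fintype.sum_prod_type]
    have e1 : ∀ d θ, (∑ y, ∑ z, ∑ x, p x y z d θ) = ∑ x, ∑ y, ∑ z, p x y z d θ :=
      fun d θ => p3 _
    have e2 : ∀ y d θ, (∑ z, ∑ x, p x y z d θ) = ∑ x, ∑ z, p x y z d θ := fun y d θ => p2 _
    have e3 : ∀ z d θ, (∑ y, ∑ x, p x y z d θ) = ∑ x, ∑ y, p x y z d θ := fun z d θ => p2 _
    have e1' : ∀ d θ, (∑ y, ∑ x, ∑ z, p x y z d θ) = ∑ x, ∑ y, ∑ z, p x y z d θ :=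
      fun d θ => p2 _
    simp only [e1, e2, e3, e1', Finset.sum_mul]
    rw [p3, p4, p4, p4, p5]
  have hc2 : condMI (fun (yd : Y × D) θ x => ∑ z, p x yd.1 z yd.2 θ) =
      SS p (fun x y z d θ => Real.log (mgXYDTh p x y d θ) + Real.log (mgX p x)
        - Real.log (mgXYD p x y d) - Real.log (mgXTh p x θ)) := by
    rw [condMI_expand _ (fun (yd : Y × D) θ x => snn fun z => hnn x yd.1 z yd.2 θ)]
    unfold SS mgXYDTh mgX mgXYD mgXTh
    simp only [Fintype.sum_prod_type]
    have e1 : ∀ x, (∑ y, ∑ d, ∑ θ, ∑ z, p x y z d θ) = ∑ y, ∑ z, ∑ d, ∑ θ, p x y z d θ :=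
      fun x => scongr fun y => p3 _
    have e2 : ∀ x y d, (∑ θ, ∑ z, p x y z d θ) = ∑ z, ∑ θ, p x y z d θ := fun x y d => p2 _
    have e3 : ∀ x θ, (∑ y, ∑ d, ∑ z, p x y z d θ) = ∑ y, ∑ z, ∑ d, p x y z d θ :=
      fun x θ => scongr fun y => p2 _
    have e1' : ∀ x, (∑ y, ∑ d, ∑ z, ∑ θ, p x y z d θ) = ∑ y, ∑ z, ∑ d, ∑ θ, p x y z d θ :=
      fun x => scongr fun y => p2 _
    simp only [e1, e2, e3, e1', Finset.sum_mul]
    rw [p3, p3, p5, p4, p5]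
  have hc3 : condMI (fun x y θ => ∑ z, ∑ d, p x y z d θ) =
      SS p (fun x y _ _ θ => Real.log (mgXYTh p x y θ) + Real.log (mgTh p θ)
        - Real.log (mgXTh p x θ) - Real.log (mgYTh p y θ)) := by
    rw [condMI_expand _ (fun x y θ => snn fun z => snn fun d => hnn x y z d θ)]
    unfold SS mgXYTh mgTh mgXTh mgYTh
    simp only [Finset.sum_mul]
    refine scongr fun x => scongr fun y => ?_
    rw [← p3]
  have hc4 : condMI (fun y d θ => ∑ x, ∑ z, p x y z d θ) =
      SS p (fun _ y _ d θ => Real.log (mgYDTh p y d θ) + Real.log (mgTh p θ)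
        - Real.log (mgYTh p y θ) - Real.log (mgDTh p d θ)) := by
    rw [condMI_expand _ (fun y d θ => snn fun x => snn fun z => hnn x y z d θ)]
    unfold SS mgYDTh mgTh mgYTh mgDTh
    have e1 : ∀ θ, (∑ y, ∑ d, ∑ x, ∑ z, p x y z d θ) = ∑ x, ∑ y, ∑ z, ∑ d, p x y z d θ :=
      fun θ => by rw [p2, p4, p3, p4]
    have e2 : ∀ y θ, (∑ d, ∑ x, ∑ z, p x y z d θ) = ∑ x, ∑ z, ∑ d, p x y z d θ :=
      fun y θ => (p3 _).symm
    have e3 : ∀ d θ, (∑ y, ∑ x, ∑ z, p x y z d θ) = ∑ x, ∑ y, ∑ z, p x y z d θ :=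
      fun d θ => p2 _
    have e1' : ∀ θ, (∑ y, ∑ x, ∑ z, ∑ d, p x y z d θ) = ∑ x, ∑ y, ∑ z, ∑ d, p x y z d θ :=
      fun θ => p2 _
    simp only [e1, e2, e3, e1', Finset.sum_mul]
    rw [p3, p3, p5, p4, p5]
  have hcA : (∑ x, ∑ y, ∑ θ,
        (if 0 < (∑ z, ∑ d, p x y z d θ) then
          (∑ z, ∑ d, p x y z d θ) *
            (∑ z,
              if 0 < (∑ y', ∑ d, p x y' z d θ) /
                  (∑ y', ∑ z', ∑ d, p x y' z' d θ) then
                ((∑ y', ∑ d, p x y' z d θ) /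
                    (∑ y', ∑ z', ∑ d, p x y' z' d θ)) *
                  Real.log ((∑ x', ∑ d, p x' y z d θ) /
                    (∑ x', ∑ y', ∑ d, p x' y' z d θ))
              else 0)
        else 0)) =
      SS p (fun _ y z _ θ => Real.log (mgYZTh p y z θ) - Real.log (mgZTh p z θ)) := by
    simp only [SS, mgYZTh, mgZTh]
    trans (∑ x, ∑ y, ∑ θ, ∑ z, ∑ d, p x y z d θ *
      (Real.log (∑ x', ∑ d', p x' y z d' θ) - Real.log (∑ x', ∑ y', ∑ d', p x' y' z d' θ)))
    · refine scongr fun x => scongr fun y => scongr fun θ => ?_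
      by_cases hM : 0 < ∑ z, ∑ d, p x y z d θ
      · rw [if_pos hM, Finset.mul_sum]
        refine scongr fun z => ?_
        have hXT : 0 < ∑ y', ∑ z', ∑ d, p x y' z' d θ :=
          lt_of_lt_of_le hM (sle (fun y' => snn fun z' => snn fun d => hnn x y' z' d θ) y)
        by_cases hu : 0 < ∑ y', ∑ d, p x y' z d θ
        · rw [if_pos (div_pos hu hXT)]
          have hq : (∑ z, ∑ d, p x y z d θ) *
              ((∑ y', ∑ d, p x y' z d θ) / (∑ y', ∑ z', ∑ d, p x y' z' d θ)) =
              ∑ d, p x y z d θ := by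
            rw [← mul_div_assoc, div_eq_iff (ne_of_gt hXT)]
            linarith [hci₂ x y z θ]
          have hqpos : 0 < ∑ d, p x y z d θ := by
            rw [← hq]; exact mul_pos hM (div_pos hu hXT)
          have hA : 0 < ∑ x', ∑ d, p x' y z d θ :=
            lt_of_lt_of_le hqpos (sle (fun x' => snn fun d => hnn x' y z d θ) x)
          have hB : 0 < ∑ x', ∑ y', ∑ d, p x' y' z d θ :=
            lt_of_lt_of_le hqpos (sle2 (fun x' y' => snn fun d => hnn x' y' z d θ) x y)
          rw [← mul_assoc, hq, Real.log_div (ne_of_gt hA) (ne_of_gt hB), ← Finset.sum_mul]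
        · have hu0 : (∑ y', ∑ d, p x y' z d θ) = 0 :=
            le_antisymm (not_lt.mp hu) (snn fun y' => snn fun d => hnn x y' z d θ)
          have hd0 : (∑ d, p x y z d θ) = 0 :=
            le_antisymm ((sle (fun y' => snn fun d => hnn x y' z d θ) y).trans hu0.le)
              (snn fun d => hnn x y z d θ)
          have h0 : ∀ d, p x y z d θ = 0 := fun d =>
            le_antisymm ((sle (fun d => hnn x y z d θ) d).trans hd0.le) (hnn _ _ _ _ _)
          rw [hu0, zero_div]
          simp [h0]
      · rw [if_neg hM]
        have h0 : ∀ z d, p x y z d θ = 0 := fun z d =>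
          le_antisymm ((sle2 (fun z d => hnn x y z d θ) z d).trans (not_lt.mp hM))
            (hnn _ _ _ _ _)
        simp [h0]
    · refine scongr fun x => scongr fun y => ?_
      rw [← p3]
  have hc5 : (∑ x, ∑ θ,
        (if 0 < (∑ y, ∑ z, ∑ d, p x y z d θ) then
          (∑ y, ∑ z, ∑ d, p x y z d θ) *
            KLdiv
              (fun z => (∑ y, ∑ d, p x y z d θ) /
                (∑ y, ∑ z', ∑ d, p x y z' d θ))
              rZ
        else 0)) =
      SS p (fun x _ z _ θ => Real.log (mgXZTh p x z θ) - Real.log (mgXTh p x θ)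
        - Real.log (rZ z)) := by
    simp only [SS, KLdiv, mgXZTh, mgXTh]
    trans (∑ x, ∑ θ, ∑ z, ∑ y, ∑ d, p x y z d θ *
      (Real.log (∑ y', ∑ d', p x y' z d' θ) - Real.log (∑ y', ∑ z', ∑ d', p x y' z' d' θ)
        - Real.log (rZ z)))
    · refine scongr fun x => scongr fun θ => ?_
      by_cases hM : 0 < ∑ y, ∑ z, ∑ d, p x y z d θ
      · rw [if_pos hM, Finset.mul_sum]
        refine scongr fun z => ?_
        by_cases hu : 0 < ∑ y, ∑ d, p x y z d θ
        · rw [if_pos (div_pos hu hM),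
            Real.log_div (ne_of_gt (div_pos hu hM)) (ne_of_gt (hrZ_pos z)),
            Real.log_div (ne_of_gt hu) (ne_of_gt hM)]
          have hM' : (∑ y, ∑ z, ∑ d, p x y z d θ) ≠ 0 := ne_of_gt hM
          simp only [← Finset.sum_mul]
          field_simp
        · have hu0 : (∑ y, ∑ d, p x y z d θ) = 0 :=
            le_antisymm (not_lt.mp hu) (snn fun y => snn fun d => hnn x y z d θ)
          have h0 : ∀ y d, p x y z d θ = 0 := fun y d =>
            le_antisymm ((sle2 (fun y d => hnn x y z d θ) y d).trans hu0.le) (hnn _ _ _ _ _)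
          rw [hu0, zero_div]
          simp [h0]
      · rw [if_neg hM]
        have h0 : ∀ y z d, p x y z d θ = 0 := fun y z d =>
          le_antisymm ((sle3 (fun y z d => hnn x y z d θ) y z d).trans (not_lt.mp hM))
            (hnn _ _ _ _ _)
        simp [h0]
    · refine scongr fun x => ?_
      rw [p4, p3, p4]
  have hc6 : (∑ x, ∑ y, ∑ d,
        (if 0 < (∑ z, ∑ θ, p x y z d θ) then
          (∑ z, ∑ θ, p x y z d θ) *
            KLdiv
              (fun θ => (∑ z, p x y z d θ) / (∑ z, ∑ θ', p x y z d θ'))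
              rΘ
        else 0)) =
      SS p (fun x y _ d θ => Real.log (mgXYDTh p x y d θ) - Real.log (mgXYD p x y d)
        - Real.log (rΘ θ)) := by
    simp only [SS, KLdiv, mgXYDTh, mgXYD]
    trans (∑ x, ∑ y, ∑ d, ∑ θ, ∑ z, p x y z d θ *
      (Real.log (∑ z', p x y z' d θ) - Real.log (∑ z', ∑ θ', p x y z' d θ')
        - Real.log (rΘ θ)))
    · refine scongr fun x => scongr fun y => scongr fun d => ?_
      by_cases hM : 0 < ∑ z, ∑ θ, p x y z d θ
      · rw [if_pos hM, Finset.mul_sum]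
        refine scongr fun θ => ?_
        by_cases hu : 0 < ∑ z, p x y z d θ
        · rw [if_pos (div_pos hu hM),
            Real.log_div (ne_of_gt (div_pos hu hM)) (ne_of_gt (hrΘ_pos θ)),
            Real.log_div (ne_of_gt hu) (ne_of_gt hM)]
          have hM' : (∑ z, ∑ θ, p x y z d θ) ≠ 0 := ne_of_gt hM
          simp only [← Finset.sum_mul]
          field_simp
        · have hu0 : (∑ z, p x y z d θ) = 0 :=
            le_antisymm (not_lt.mp hu) (snn fun z => hnn x y z d θ)
          have h0 : ∀ z, p x y z d θ = 0 := fun z =>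
            le_antisymm ((sle (fun z => hnn x y z d θ) z).trans hu0.le) (hnn _ _ _ _ _)
          rw [hu0, zero_div]
          simp [h0]
      · rw [if_neg hM]
        have h0 : ∀ z θ, p x y z d θ = 0 := fun z θ =>
          le_antisymm ((sle2 (fun z θ => hnn x y z d θ) z θ).trans (not_lt.mp hM))
            (hnn _ _ _ _ _)
        simp [h0]
    · refine scongr fun x => scongr fun y => ?_
      rw [p3]
  -- the two exact linear identities between the log-combinations
  have hlin1 : SS p (fun _ y z d θ => Real.log (mgYZDTh p y z d θ) + Real.log (mgDTh p d θ)
        - Real.log (mgYDTh p y d θ) - Real.log (mgZDTh p z d θ)) +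
      SS p (fun _ y _ d θ => Real.log (mgYDTh p y d θ) + Real.log (mgTh p θ)
        - Real.log (mgYTh p y θ) - Real.log (mgDTh p d θ)) =
      SS p (fun _ y z _ θ => Real.log (mgYZTh p y z θ) - Real.log (mgZTh p z θ)) +
      SS p (fun x y _ _ θ => Real.log (mgXYTh p x y θ) + Real.log (mgTh p θ)
        - Real.log (mgXTh p x θ) - Real.log (mgYTh p y θ)) +
      SS p (fun _ y z d θ => Real.log (mgYZDTh p y z d θ) + Real.log (mgZTh p z θ)
        - Real.log (mgYZTh p y z θ) - Real.log (mgZDTh p z d θ)) +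
      SS p (fun x y _ _ θ => Real.log (mgXTh p x θ) - Real.log (mgXYTh p x y θ)) := by
    unfold SS
    simp only [← Finset.sum_add_distrib]
    refine scongr fun x => scongr fun y => scongr fun z => scongr fun d => scongr fun θ => ?_
    ring
  have hlin2 : SS p (fun x y _ d θ => Real.log (mgXYDTh p x y d θ) - Real.log (mgXYD p x y d)
        - Real.log (rΘ θ)) =
      SS p (fun x y z d θ => Real.log (mgXYDTh p x y d θ) + Real.log (mgX p x)
        - Real.log (mgXYD p x y d) - Real.log (mgXTh p x θ)) +
      SS p (fun x _ _ _ θ => Real.log (mgXTh p x θ) - Real.log (mgX p x)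
        - Real.log (rΘ θ)) := by
    unfold SS
    simp only [← Finset.sum_add_distrib]
    refine scongr fun x => scongr fun y => scongr fun z => scongr fun d => scongr fun θ => ?_
    ring
  -- nonnegativity of the four slack terms
  have hs1 : 0 ≤ SS p (fun _ y z d θ => Real.log (mgYZDTh p y z d θ) + Real.log (mgZTh p z θ)
      - Real.log (mgYZTh p y z θ) - Real.log (mgZDTh p z d θ)) := by
    unfold SS mgYZDTh mgZTh mgYZTh mgZDTh
    have key : ∀ y z d θ, (∑ x, p x y z d θ) *
        (Real.log (∑ x, p x y z d θ) -
          Real.log ((∑ x, ∑ d', p x y z d' θ) * (∑ x, ∑ y', p x y' z d θ) /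
            (∑ x, ∑ y', ∑ d', p x y' z d' θ))) =
        ∑ x, p x y z d θ *
          (Real.log (∑ x', p x' y z d θ) + Real.log (∑ x', ∑ y', ∑ d', p x' y' z d' θ)
            - Real.log (∑ x', ∑ d', p x' y z d' θ) - Real.log (∑ x', ∑ y', p x' y' z d θ)) := by
      intro y z d θ
      rcases (snn fun x => hnn x y z d θ : (0:ℝ) ≤ ∑ x, p x y z d θ).lt_or_eq with hp | hp
      · have hp' : ∑ x : X, (0:ℝ) < ∑ x, p x y z d θ := by simpa using hp
        obtain ⟨x, -, hx⟩ := Finset.exists_lt_of_sum_lt hp'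
        have h1 : 0 < ∑ x', ∑ d', p x' y z d' θ :=
          lt_of_lt_of_le hx (sle2 (fun x' d' => hnn x' y z d' θ) x d)
        have h2 : 0 < ∑ x', ∑ y', p x' y' z d θ :=
          lt_of_lt_of_le hx (sle2 (fun x' y' => hnn x' y' z d θ) x y)
        have h3 : 0 < ∑ x', ∑ y', ∑ d', p x' y' z d' θ :=
          lt_of_lt_of_le hx (sle3 (fun x' y' d' => hnn x' y' z d' θ) x y d)
        rw [Real.log_div (ne_of_gt (mul_pos h1 h2)) (ne_of_gt h3),
          Real.log_mul (ne_of_gt h1) (ne_of_gt h2)]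
        simp only [← Finset.sum_mul]
        ring
      · have h0 : ∀ x, p x y z d θ = 0 := fun x =>
          le_antisymm ((sle (fun x => hnn x y z d θ) x).trans hp.ge) (hnn x y z d θ)
        simp [h0]
    have hg := gibbs (fun v : Y × Z × D × Θ => ∑ x, p x v.1 v.2.1 v.2.2.1 v.2.2.2)
      (fun v : Y × Z × D × Θ => (∑ x, ∑ d', p x v.1 v.2.1 d' v.2.2.2) *
        (∑ x, ∑ y', p x y' v.2.1 v.2.2.1 v.2.2.2) /
        (∑ x, ∑ y', ∑ d', p x y' v.2.1 d' v.2.2.2))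
      (fun v => snn fun x => hnn x _ _ _ _)
      (fun v => div_nonneg (mul_nonneg (snn fun x => snn fun d' => hnn _ _ _ _ _)
        (snn fun x => snn fun y' => hnn _ _ _ _ _)) (snn fun x => snn fun y' => snn fun d' =>
          hnn _ _ _ _ _))
      (fun v hv => by
        have hv' : ∑ x : X, (0:ℝ) < ∑ x, p x v.1 v.2.1 v.2.2.1 v.2.2.2 := by simpa using hv
        obtain ⟨x, -, hx⟩ := Finset.exists_lt_of_sum_lt hv'
        exact div_pos (mul_pos
          (lt_of_lt_of_le hx (sle2 (fun x' d' => hnn x' v.1 v.2.1 d' v.2.2.2) x v.2.2.1))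
          (lt_of_lt_of_le hx (sle2 (fun x' y' => hnn x' y' v.2.1 v.2.2.1 v.2.2.2) x v.1)))
          (lt_of_lt_of_le hx (sle3 (fun x' y' d' => hnn x' y' v.2.1 d' v.2.2.2) x v.1 v.2.2.1)))
      (by
        simp only [Fintype.sum_prod_type]
        calc (∑ y, ∑ z, ∑ d, ∑ θ, (∑ x, ∑ d', p x y z d' θ) * (∑ x, ∑ y', p x y' z d θ) /
              (∑ x, ∑ y', ∑ d', p x y' z d' θ))
            = ∑ z, ∑ θ, ∑ y, ∑ d, (∑ x, ∑ d', p x y z d' θ) * (∑ x, ∑ y', p x y' z d θ) /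
              (∑ x, ∑ y', ∑ d', p x y' z d' θ) := by rw [p3, p2, p4, p4]
          _ ≤ ∑ z, ∑ θ, ∑ x, ∑ y, ∑ d, p x y z d θ := by
              refine Finset.sum_le_sum fun z _ => Finset.sum_le_sum fun θ _ => ?_
              simp only [← Finset.sum_div, ← Finset.mul_sum, ← Finset.sum_mul]
              rw [show (∑ y, ∑ x, ∑ d', p x y z d' θ) = ∑ x, ∑ y, ∑ d', p x y z d' θ from
                p2 _]
              rw [show (∑ d, ∑ x, ∑ y', p x y' z d θ) = ∑ x, ∑ y', ∑ d, p x y' z d θ from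
                (p3 _).symm]
              rcases (snn fun x => snn fun y => snn fun d => hnn x y z d θ :
                  (0:ℝ) ≤ ∑ x, ∑ y, ∑ d, p x y z d θ).lt_or_eq with hC | hC
              · exact le_of_eq (by field_simp)
              · rw [← hC]; simp
          _ = ∑ y, ∑ z, ∑ d, ∑ θ, ∑ x, p x y z d θ := by rw [p3, p3, p5, p4, p5]
        )
    refine le_trans hg (le_of_eq ?_)
    simp only [Fintype.sum_prod_type]
    refine Eq.trans (scongr fun y => scongr fun z => scongr fun d => scongr fun θ =>
      key y z d θ) ?_
    exact p5 fun y z d θ x => p x y z d θ *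
      (Real.log (∑ x', p x' y z d θ) + Real.log (∑ x', ∑ y', ∑ d', p x' y' z d' θ)
        - Real.log (∑ x', ∑ d', p x' y z d' θ) - Real.log (∑ x', ∑ y', p x' y' z d θ))
  have hs3 : 0 ≤ SS p (fun x y _ _ θ => Real.log (mgXTh p x θ) - Real.log (mgXYTh p x y θ)) := by
    unfold SS mgXTh mgXYTh
    refine snn fun x => snn fun y => snn fun z => snn fun d => snn fun θ => ?_
    rcases (hnn x y z d θ).lt_or_eq with hp | hp
    · refine mul_nonneg (hnn _ _ _ _ _) (sub_nonneg.mpr (Real.log_le_log ?_ ?_))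
      · exact lt_of_lt_of_le hp (sle2 (fun z' d' => hnn x y z' d' θ) z d)
      · exact sle (fun y' => snn fun z' => snn fun d' => hnn x y' z' d' θ) y
    · rw [← hp, zero_mul]
  have hs5 : 0 ≤ SS p (fun x _ z _ θ => Real.log (mgXZTh p x z θ) - Real.log (mgXTh p x θ)
      - Real.log (rZ z)) := by
    unfold SS mgXZTh mgXTh
    have key : ∀ x z θ, (∑ y, ∑ d, p x y z d θ) *
        (Real.log (∑ y, ∑ d, p x y z d θ) -
          Real.log ((∑ y, ∑ z', ∑ d, p x y z' d θ) * rZ z)) =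
        ∑ y, ∑ d, p x y z d θ *
          (Real.log (∑ y', ∑ d', p x y' z d' θ) -
            Real.log (∑ y', ∑ z', ∑ d', p x y' z' d' θ) - Real.log (rZ z)) := by
      intro x z θ
      rcases (snn fun y => snn fun d => hnn x y z d θ :
          (0:ℝ) ≤ ∑ y, ∑ d, p x y z d θ).lt_or_eq with hp | hp
      · have hX : 0 < ∑ y, ∑ z', ∑ d, p x y z' d θ :=
          lt_of_lt_of_le hp (Finset.sum_le_sum fun y _ =>
            sle (fun z' => snn fun d => hnn x y z' d θ) z)
        rw [Real.log_mul (ne_of_gt hX) (ne_of_gt (hrZ_pos z))]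
        simp only [← Finset.sum_mul]
        ring
      · have h0 : ∀ y d, p x y z d θ = 0 := fun y d =>
          le_antisymm ((sle2 (fun y d => hnn x y z d θ) y d).trans hp.ge) (hnn x y z d θ)
        simp [h0]
    have hg := gibbs (fun v : X × Z × Θ => ∑ y, ∑ d, p v.1 y v.2.1 d v.2.2)
      (fun v : X × Z × Θ => (∑ y, ∑ z', ∑ d, p v.1 y z' d v.2.2) * rZ v.2.1)
      (fun v => snn fun y => snn fun d => hnn _ y _ d _)
      (fun v => mul_nonneg (snn fun y => snn fun z' => snn fun d =>
        hnn _ y z' d _) (hrZ_pos v.2.1).le)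
      (fun v hv => mul_pos (lt_of_lt_of_le hv (Finset.sum_le_sum fun y _ =>
        sle (fun z' => snn fun d => hnn v.1 y z' d v.2.2) v.2.1)) (hrZ_pos v.2.1))
      (by
        simp only [Fintype.sum_prod_type]
        refine le_of_eq (scongr fun x => ?_)
        simp only [← Finset.sum_mul]
        rw [← Finset.mul_sum, hrZ_sum, mul_one]
        exact p3 fun θ y z => ∑ d, p x y z d θ)
    refine le_trans hg (le_of_eq ?_)
    simp only [Fintype.sum_prod_type]
    refine scongr fun x => ?_
    refine Eq.trans (scongr fun z => scongr fun θ => key x z θ) ?_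
    rw [p4, p2, p4]
  have hs4 : 0 ≤ SS p (fun x _ _ _ θ => Real.log (mgXTh p x θ) - Real.log (mgX p x)
      - Real.log (rΘ θ)) := by
    unfold SS mgXTh mgX
    have key : ∀ x θ, (∑ y, ∑ z, ∑ d, p x y z d θ) *
        (Real.log (∑ y, ∑ z, ∑ d, p x y z d θ) -
          Real.log ((∑ y, ∑ z, ∑ d, ∑ θ', p x y z d θ') * rΘ θ)) =
        ∑ y, ∑ z, ∑ d, p x y z d θ *
          (Real.log (∑ y', ∑ z', ∑ d', p x y' z' d' θ) -
            Real.log (∑ y', ∑ z', ∑ d', ∑ θ', p x y' z' d' θ') - Real.log (rΘ θ)) := by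
      intro x θ
      rcases (snn fun y => snn fun z => snn fun d => hnn x y z d θ :
          (0:ℝ) ≤ ∑ y, ∑ z, ∑ d, p x y z d θ).lt_or_eq with hp | hp
      · have hX : 0 < ∑ y, ∑ z, ∑ d, ∑ θ', p x y z d θ' :=
          lt_of_lt_of_le hp (Finset.sum_le_sum fun y _ => Finset.sum_le_sum fun z _ =>
            Finset.sum_le_sum fun d _ => sle (fun θ' => hnn x y z d θ') θ)
        rw [Real.log_mul (ne_of_gt hX) (ne_of_gt (hrΘ_pos θ))]
        simp only [← Finset.sum_mul]
        ring
      · have h0 : ∀ y z d, p x y z d θ = 0 := fun y z d =>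
          le_antisymm ((sle3 (fun y z d => hnn x y z d θ) y z d).trans hp.ge) (hnn x y z d θ)
        simp [h0]
    have hg := gibbs (fun v : X × Θ => ∑ y, ∑ z, ∑ d, p v.1 y z d v.2)
      (fun v : X × Θ => (∑ y, ∑ z, ∑ d, ∑ θ', p v.1 y z d θ') * rΘ v.2)
      (fun v => snn fun y => snn fun z => snn fun d => hnn _ y z d _)
      (fun v => mul_nonneg (snn fun y => snn fun z => snn fun d => snn fun θ' =>
        hnn _ y z d θ') (hrΘ_pos v.2).le)
      (fun v hv => mul_pos (lt_of_lt_of_le hv (Finset.sum_le_sum fun y _ =>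
        Finset.sum_le_sum fun z _ => Finset.sum_le_sum fun d _ =>
          sle (fun θ' => hnn v.1 y z d θ') v.2)) (hrΘ_pos v.2))
      (by
        simp only [Fintype.sum_prod_type]
        refine le_of_eq (scongr fun x => ?_)
        rw [← Finset.mul_sum, hrΘ_sum, mul_one]
        exact p4 fun y z d θ' => p x y z d θ')
    refine le_trans hg (le_of_eq ?_)
    rw [Fintype.sum_prod_type]
    refine scongr fun x => ?_
    refine Eq.trans (scongr fun θ => key x θ) ?_
    exact (p4 fun y z d θ => p x y z d θ *
      (Real.log (∑ y', ∑ z', ∑ d', p x y' z' d' θ) -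
        Real.log (∑ y', ∑ z', ∑ d', ∑ θ', p x y' z' d' θ') - Real.log (rΘ θ))).symm
  rw [hc1, hc2, hc3, hc4, hcA, hc5, hc6]
  have hb4 : 0 ≤ β * SS p (fun x _ _ _ θ => Real.log (mgXTh p x θ) - Real.log (mgX p x)
      - Real.log (rΘ θ)) := mul_nonneg hβ hs4
  have hmul : β * SS p (fun x y _ d θ => Real.log (mgXYDTh p x y d θ) - Real.log (mgXYD p x y d)
        - Real.log (rΘ θ)) =
      β * SS p (fun x y z d θ => Real.log (mgXYDTh p x y d θ) + Real.log (mgX p x)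
        - Real.log (mgXYD p x y d) - Real.log (mgXTh p x θ)) +
      β * SS p (fun x _ _ _ θ => Real.log (mgXTh p x θ) - Real.log (mgX p x)
        - Real.log (rΘ θ)) := by rw [hlin2]; ring
  linarith [hlin1, hs1, hs3, hs5, hb4, hmul]
end
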